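/- For θ(ρ) = 2ρ/(1+ρ²) and χ(ρ) = (1/(1+ρ²))·(1/ρ² + 6ρ·log((1-ρ)/(1+ρ)) + 9), the Wronskian W(θ,χ)(ρ) = θ(ρ)χ'(ρ) - θ'(ρ)χ(ρ) equals -6/(ρ²(1-ρ²)) for all ρ ∈ (0,1). -/
import Mathlib


noncomputable def θ : ℝ → ℝ := fun ρ => 2 * ρ / (1 + ρ^2)

noncomputable def χ : ℝ → ℝ :=
  fun ρ => (1 / (1 + ρ^2)) * (1 / ρ^2 + 6 * ρ * Real.log ((1 - ρ) / (1 + ρ)) + 9)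

theorem wronskian_theta_chi (ρ : ℝ) (hρ : ρ ∈ Set.Ioo (0:ℝ) 1) :
    θ ρ * deriv χ ρ - deriv θ ρ * χ ρ = -6 / (ρ^2 * (1 - ρ^2)) := by
  obtain ⟨h0, h1⟩ := hρ
  have hρne : ρ ≠ 0 := ne_of_gt h0
  have hm : (0:ℝ) < 1 - ρ := by linarith
  have hp : (0:ℝ) < 1 + ρ := by linarith
  have hmne : (1:ℝ) - ρ ≠ 0 := ne_of_gt hm
  have hpne : (1:ℝ) + ρ ≠ 0 := ne_of_gt hp
  have hsq : (1:ℝ) + ρ^2 ≠ 0 := by positivity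
  have hqne : (1 - ρ) / (1 + ρ) ≠ 0 := div_ne_zero hmne hpne
  -- derivative of θ
  have hθ : HasDerivAt θ ((2 * (1 + ρ^2) - 2 * ρ * (2 * ρ)) / (1 + ρ^2)^2) ρ := by
    have hnum : HasDerivAt (fun x : ℝ => 2 * x) 2 ρ := by
      simpa using (hasDerivAt_id ρ).const_mul 2
    have hden : HasDerivAt (fun x : ℝ => 1 + x^2) (2 * ρ) ρ := by
      simpa using ((hasDerivAt_pow 2 ρ).const_add 1)
    exact hnum.div hden hsq
  -- derivative of the quotient inside log
  have hq : HasDerivAt (fun x : ℝ => (1 - x) / (1 + x))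
      (((-1) * (1 + ρ) - (1 - ρ) * 1) / (1 + ρ)^2) ρ := by
    have hnum : HasDerivAt (fun x : ℝ => 1 - x) (-1) ρ := by
      simpa using ((hasDerivAt_id ρ).const_sub 1)
    have hden : HasDerivAt (fun x : ℝ => 1 + x) 1 ρ := by
      simpa using ((hasDerivAt_id ρ).const_add 1)
    exact hnum.div hden hpne
  have hlog : HasDerivAt (fun x : ℝ => Real.log ((1 - x) / (1 + x)))
      ((((-1) * (1 + ρ) - (1 - ρ) * 1) / (1 + ρ)^2) / ((1 - ρ) / (1 + ρ))) ρ :=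
    hq.log hqne
  have hx : HasDerivAt (fun x : ℝ => 6 * x) 6 ρ := by
    simpa using (hasDerivAt_id ρ).const_mul 6
  have hprod : HasDerivAt (fun x : ℝ => 6 * x * Real.log ((1 - x) / (1 + x)))
      (6 * Real.log ((1 - ρ) / (1 + ρ)) +
        6 * ρ * ((((-1) * (1 + ρ) - (1 - ρ) * 1) / (1 + ρ)^2) / ((1 - ρ) / (1 + ρ)))) ρ :=
    hx.mul hlog
  have hinv : HasDerivAt (fun x : ℝ => 1 / x^2)
      ((0 * ρ^2 - 1 * (2 * ρ)) / (ρ^2)^2) ρ := by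
    exact (hasDerivAt_const ρ 1).div (by simpa using hasDerivAt_pow 2 ρ) (pow_ne_zero 2 hρne)
  have hfst : HasDerivAt (fun x : ℝ => 1 / (1 + x^2))
      ((0 * (1 + ρ^2) - 1 * (2 * ρ)) / ((1 + ρ^2))^2) ρ := by
    exact (hasDerivAt_const ρ 1).div (by simpa using (hasDerivAt_pow 2 ρ).const_add 1) hsq
  have hg : HasDerivAt (fun x : ℝ => 1 / x^2 + 6 * x * Real.log ((1 - x) / (1 + x)) + 9)
      ((0 * ρ^2 - 1 * (2 * ρ)) / (ρ^2)^2 +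
        (6 * Real.log ((1 - ρ) / (1 + ρ)) +
          6 * ρ * ((((-1) * (1 + ρ) - (1 - ρ) * 1) / (1 + ρ)^2) / ((1 - ρ) / (1 + ρ))))) ρ := by
    simpa using (hinv.add hprod).add_const 9
  have hχ : HasDerivAt χ
      ((0 * (1 + ρ^2) - 1 * (2 * ρ)) / ((1 + ρ^2))^2 *
          (1 / ρ^2 + 6 * ρ * Real.log ((1 - ρ) / (1 + ρ)) + 9) +
        (1 / (1 + ρ^2)) *
          ((0 * ρ^2 - 1 * (2 * ρ)) / (ρ^2)^2 +
            (6 * Real.log ((1 - ρ) / (1 + ρ)) +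
              6 * ρ * ((((-1) * (1 + ρ) - (1 - ρ) * 1) / (1 + ρ)^2) / ((1 - ρ) / (1 + ρ)))))) ρ :=
    hfst.mul hg
  rw [hθ.deriv, hχ.deriv]
  have h1m : (1:ℝ) - ρ^2 ≠ 0 := by nlinarith
  simp only [θ, χ]
  set L := Real.log ((1 - ρ) / (1 + ρ)) with hL
  field_simp
  ring
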